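/- The function $\phi : \mathbb{R} \to \mathbb{R}$ defined by $\phi(\rho) = \frac{6(1-e^{-\rho})}{\rho^4}\left(-2 + \rho + (2+\rho)e^{-\rho}\right)$ for $\rho \neq 0$ and $\phi(0) = 1$ satisfies $\phi(\rho) > 0$ for all $\rho \in \mathbb{R}$. -/

import Mathlib

/-!
Both factors `1 - e^{-ρ}` and `g(ρ) = -2 + ρ + (2 + ρ)e^{-ρ}` are strictly increasing and vanish
at `0`, so they have the sign of `ρ` and their product is positive for `ρ ≠ 0`. For `g` this
follows from `g'(ρ) = 1 - (1 + ρ)e^{-ρ}`, which is positive for `ρ ≠ 0` because `1 + ρ < e^ρ`.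
-/

open Real

lemma strictMono_of_hasDerivAt_pos_of_ne {f f' : ℝ → ℝ} (a : ℝ)
    (hf : ∀ x, HasDerivAt f (f' x) x) (hf' : ∀ x, x ≠ a → 0 < f' x) : StrictMono f := by
  have hcont : Continuous f := continuous_iff_continuousAt.2 fun x ↦ (hf x).continuousAt
  refine StrictMonoOn.Iic_union_Ici (a := a) ?_ ?_
  · refine strictMonoOn_of_hasDerivWithinAt_pos (convex_Iic a) hcont.continuousOn
      (fun x _ ↦ (hf x).hasDerivWithinAt) fun x hx ↦ hf' x ?_
    rw [interior_Iic] at hx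
    exact hx.ne
  · refine strictMonoOn_of_hasDerivWithinAt_pos (convex_Ici a) hcont.continuousOn
      (fun x _ ↦ (hf x).hasDerivWithinAt) fun x hx ↦ hf' x ?_
    rw [interior_Ici] at hx
    exact hx.ne'

lemma StrictMono.mul_pos_of_ne {α β : Type*} [LinearOrder α] [Ring β] [LinearOrder β]
    [IsStrictOrderedRing β] {f g : α → β} {a x : α} (hf : StrictMono f) (hg : StrictMono g)
    (hfa : f a = 0) (hga : g a = 0) (hx : x ≠ a) : 0 < f x * g x := by
  rcases hx.lt_or_gt with hlt | hgt
  · exact mul_pos_of_neg_of_neg (hfa ▸ hf hlt) (hga ▸ hg hlt)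
  · exact mul_pos (hfa ▸ hf hgt) (hga ▸ hg hgt)

lemma strictMono_one_sub_exp_neg : StrictMono fun x : ℝ ↦ 1 - exp (-x) :=
  fun _ _ hxy ↦ sub_lt_sub_left (exp_lt_exp.2 (neg_lt_neg hxy)) 1

lemma hasDerivAt_neg_two_add_add_mul_exp_neg (x : ℝ) :
    HasDerivAt (fun x ↦ -2 + x + (2 + x) * exp (-x)) (1 - (1 + x) * exp (-x)) x := by
  have hexp : HasDerivAt (fun x ↦ exp (-x)) (-exp (-x)) x := by
    simpa using (hasDerivAt_neg x).exp
  exact (((hasDerivAt_id' x).const_add (-2)).add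
    (((hasDerivAt_id' x).const_add 2).mul hexp)).congr_deriv (by ring)

lemma one_add_mul_exp_neg_lt_one {x : ℝ} (hx : x ≠ 0) : (1 + x) * exp (-x) < 1 :=
  calc (1 + x) * exp (-x) < exp x * exp (-x) := by
        gcongr
        linarith [add_one_lt_exp hx]
    _ = 1 := by rw [← exp_add, add_neg_cancel, exp_zero]

lemma strictMono_neg_two_add_add_mul_exp_neg :
    StrictMono fun x : ℝ ↦ -2 + x + (2 + x) * exp (-x) :=
  strictMono_of_hasDerivAt_pos_of_ne 0 hasDerivAt_neg_two_add_add_mul_exp_neg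
    fun _ hx ↦ sub_pos.2 (one_add_mul_exp_neg_lt_one hx)

/-- `φ(ρ) = (6(1-e^{-ρ})/ρ⁴)(-2 + ρ + (2+ρ)e^{-ρ})` for `ρ ≠ 0`, `φ(0) = 1`,
is positive on all of `ℝ`. -/
theorem phi_pos (φ : ℝ → ℝ)
    (h : ∀ ρ : ℝ, ρ ≠ 0 →
      φ ρ = 6 * (1 - Real.exp (-ρ)) / ρ ^ 4 * (-2 + ρ + (2 + ρ) * Real.exp (-ρ)))
    (h0 : φ 0 = 1) :
    ∀ ρ : ℝ, 0 < φ ρ := by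
  intro ρ
  rcases eq_or_ne ρ 0 with rfl | hρ
  · rw [h0]
    exact one_pos
  have hprod : 0 < (1 - exp (-ρ)) * (-2 + ρ + (2 + ρ) * exp (-ρ)) :=
    strictMono_one_sub_exp_neg.mul_pos_of_ne strictMono_neg_two_add_add_mul_exp_neg
      (by simp) (by simp) hρ
  rw [h ρ hρ, div_mul_eq_mul_div, mul_assoc]
  positivity
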